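/- arXiv:2303.01168 — 3 statements merged into one kernel-verified Lean document; each statement's English description precedes it below -/
import Mathlib

section
/- The number of cubefull numbers up to x is O(x^{1/3}): there is a constant C such that #{n ≤ x : for every prime p dividing n, p³ divides n} ≤ C·x^{1/3} for all x ≥ 1. -/
/-!
Every exponent `e ≥ 3` is `3a + 4b + 5c` with `b, c ∈ {0, 1}`, so distributing the prime
factorisation of a cubefull `n` writes it as `a³b⁴c⁵`. For fixed `b, c` the number of `a` with
`a³b⁴c⁵ ≤ x` is at most `x^{1/3} b^{-4/3} c^{-5/3}`, and summing over `b, c` gives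
`x^{1/3} ζ(4/3) ζ(5/3)`.
-/

open Finset

def IsCubefull (n : ℕ) : Prop := ∀ p : ℕ, p.Prime → p ∣ n → p ^ 3 ∣ n

lemma exists_three_mul_add_four_mul_add_five_mul {e : ℕ} (he : 3 ≤ e) :
    ∃ a b c : ℕ, 3 * a + 4 * b + 5 * c = e := by
  obtain h | h | h : e % 3 = 0 ∨ e % 3 = 1 ∨ e % 3 = 2 := by omega
  · exact ⟨e / 3, 0, 0, by omega⟩
  · exact ⟨(e - 4) / 3, 1, 0, by omega⟩
  · exact ⟨(e - 5) / 3, 0, 1, by omega⟩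

lemma IsCubefull.exists_pow_three_mul_pow_four_mul_pow_five_eq {n : ℕ} (hn : n ≠ 0)
    (h : IsCubefull n) : ∃ a b c : ℕ, a ^ 3 * b ^ 4 * c ^ 5 = n := by
  have three_le : ∀ p ∈ n.primeFactors, 3 ≤ n.factorization p := fun p hp =>
    ((Nat.prime_of_mem_primeFactors hp).pow_dvd_iff_le_factorization hn).mp
      (h p (Nat.prime_of_mem_primeFactors hp) (Nat.dvd_of_mem_primeFactors hp))
  choose! a b c habc using fun p hp => exists_three_mul_add_four_mul_add_five_mul (three_le p hp)
  refine ⟨∏ p ∈ n.primeFactors, p ^ a p, ∏ p ∈ n.primeFactors, p ^ b p,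
    ∏ p ∈ n.primeFactors, p ^ c p, ?_⟩
  conv_rhs => rw [Nat.prod_primeFactors_pow_factorization hn]
  simp only [← prod_pow, ← prod_mul_distrib, ← pow_mul, ← pow_add]
  exact prod_congr rfl fun p hp => by rw [← habc p hp]; ring

lemma le_floor_rpow_inv_of_pow_mul_le {a m k : ℕ} {x : ℝ} (hk : k ≠ 0) (hm : 0 < m)
    (h : (a : ℝ) ^ k * m ≤ x) : a ≤ ⌊(x / m) ^ (k⁻¹ : ℝ)⌋₊ := by
  have hpow : (a : ℝ) ^ k ≤ x / m := by rwa [le_div_iff₀ (by positivity)]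
  apply Nat.le_floor
  calc (a : ℝ) = ((a : ℝ) ^ k) ^ (k⁻¹ : ℝ) := (Real.pow_rpow_inv_natCast a.cast_nonneg hk).symm
    _ ≤ (x / m) ^ (k⁻¹ : ℝ) := by gcongr

lemma ncard_cubefull_le_sum (x : ℝ) :
    {n : ℕ | 1 ≤ n ∧ (n : ℝ) ≤ x ∧ IsCubefull n}.ncard ≤
      ∑ q ∈ Icc 1 ⌊x⌋₊ ×ˢ Icc 1 ⌊x⌋₊, ⌊(x / (q.1 ^ 4 * q.2 ^ 5 : ℕ)) ^ ((1 : ℝ) / 3)⌋₊ := by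
  set N := ⌊x⌋₊
  let T := (Icc 1 N ×ˢ Icc 1 N).biUnion fun q =>
    (Icc 1 ⌊(x / (q.1 ^ 4 * q.2 ^ 5 : ℕ)) ^ ((1 : ℝ) / 3)⌋₊).image
      fun a => a ^ 3 * (q.1 ^ 4 * q.2 ^ 5)
  have hsub : {n : ℕ | 1 ≤ n ∧ (n : ℝ) ≤ x ∧ IsCubefull n} ⊆ T := by
    rintro n ⟨hn1, hnx, hcf⟩
    obtain ⟨a, b, c, rfl⟩ := hcf.exists_pow_three_mul_pow_four_mul_pow_five_eq (by omega)
    have hnN : a ^ 3 * b ^ 4 * c ^ 5 ≤ N := Nat.le_floor hnx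
    obtain ⟨⟨ha, hb⟩, hc⟩ : (a ≠ 0 ∧ b ≠ 0) ∧ c ≠ 0 := by
      simpa [Nat.one_le_iff_ne_zero] using hn1
    have hbN : b ≤ N := (Nat.le_self_pow (by norm_num) b).trans <|
      (Nat.le_of_dvd (by omega) ((dvd_mul_left _ _).mul_right _)).trans hnN
    have hcN : c ≤ N := (Nat.le_self_pow (by norm_num) c).trans <|
      (Nat.le_of_dvd (by omega) (dvd_mul_left _ _)).trans hnN
    have haA : a ≤ ⌊(x / (b ^ 4 * c ^ 5 : ℕ)) ^ ((1 : ℝ) / 3)⌋₊ := by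
      rw [one_div]
      exact_mod_cast le_floor_rpow_inv_of_pow_mul_le (k := 3) (by norm_num) (by positivity)
        (by push_cast at hnx ⊢; linarith)
    simp only [T, coe_biUnion, coe_image, Set.mem_iUnion, Set.mem_image, mem_coe, mem_product,
      mem_Icc]
    exact ⟨(b, c), ⟨⟨by omega, hbN⟩, by omega, hcN⟩, a, ⟨by omega, haA⟩, by ring⟩
  calc _ ≤ T.card := by simpa using Set.ncard_le_ncard hsub T.finite_toSet
    _ ≤ _ := card_biUnion_le.trans (sum_le_sum fun q _ => card_image_le.trans (by simp))

lemma div_pow_four_mul_pow_five_rpow_one_div_three {x : ℝ} (hx : 0 ≤ x) (b c : ℕ) :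
    (x / (b ^ 4 * c ^ 5 : ℕ)) ^ ((1 : ℝ) / 3) =
      x ^ ((1 : ℝ) / 3) * (b : ℝ) ^ (-4 / 3 : ℝ) * (c : ℝ) ^ (-5 / 3 : ℝ) := by
  have hb : (0 : ℝ) ≤ b := b.cast_nonneg
  have hc : (0 : ℝ) ≤ c := c.cast_nonneg
  push_cast
  rw [Real.div_rpow hx (by positivity), Real.mul_rpow (by positivity) (by positivity),
    ← Real.rpow_natCast (b : ℝ), ← Real.rpow_natCast (c : ℝ), ← Real.rpow_mul hb,
    ← Real.rpow_mul hc, div_eq_mul_inv, mul_inv, ← Real.rpow_neg hb, ← Real.rpow_neg hc]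
  norm_num
  ring

/-- The number of cubefull numbers up to `x` is `O(x^(1/3))`. -/
theorem stmt_5 :
    ∃ C : ℝ, ∀ x : ℝ, 1 ≤ x →
      (({n : ℕ | 1 ≤ n ∧ (n : ℝ) ≤ x ∧
          ∀ p : ℕ, p.Prime → p ∣ n → p ^ 3 ∣ n}.ncard : ℝ)) ≤ C * x ^ ((1 : ℝ) / 3) := by
  refine ⟨(∑' b : ℕ, (b : ℝ) ^ (-4 / 3 : ℝ)) * ∑' c : ℕ, (c : ℝ) ^ (-5 / 3 : ℝ), fun x hx => ?_⟩
  have hx0 : 0 ≤ x := by linarith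
  set N := ⌊x⌋₊
  calc _ ≤ ∑ q ∈ Icc 1 N ×ˢ Icc 1 N, (⌊(x / (q.1 ^ 4 * q.2 ^ 5 : ℕ)) ^ ((1 : ℝ) / 3)⌋₊ : ℝ) := by
        exact_mod_cast ncard_cubefull_le_sum x
    _ ≤ ∑ q ∈ Icc 1 N ×ˢ Icc 1 N,
          x ^ ((1 : ℝ) / 3) * (q.1 : ℝ) ^ (-4 / 3 : ℝ) * (q.2 : ℝ) ^ (-5 / 3 : ℝ) :=
        sum_le_sum fun q _ => (Nat.floor_le (by positivity)).trans_eq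
          (div_pow_four_mul_pow_five_rpow_one_div_three hx0 q.1 q.2)
    _ = x ^ ((1 : ℝ) / 3) * ((∑ b ∈ Icc 1 N, (b : ℝ) ^ (-4 / 3 : ℝ)) *
          ∑ c ∈ Icc 1 N, (c : ℝ) ^ (-5 / 3 : ℝ)) := by
        simp_rw [sum_product, sum_mul_sum, mul_sum, mul_assoc]
    _ ≤ x ^ ((1 : ℝ) / 3) * ((∑' b : ℕ, (b : ℝ) ^ (-4 / 3 : ℝ)) *
          ∑' c : ℕ, (c : ℝ) ^ (-5 / 3 : ℝ)) := by
        gcongr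
        · exact (Real.summable_nat_rpow.mpr (by norm_num)).sum_le_tsum _ fun _ _ => by positivity
        · exact (Real.summable_nat_rpow.mpr (by norm_num)).sum_le_tsum _ fun _ _ => by positivity
    _ = _ := mul_comm _ _
end

section
/- The number of powerful (squarefull) numbers up to x is O(x^{1/2}): there is a constant C with #{n ≤ x : p | n ⟹ p² | n} ≤ C·√x for all x ≥ 1. -/
lemma powerful_decomp {n : ℕ} (hn : 1 ≤ n) (h : ∀ p : ℕ, p.Prime → p ∣ n → p ^ 2 ∣ n) :
    ∃ a b : ℕ, 1 ≤ a ∧ 1 ≤ b ∧ n = a ^ 2 * b ^ 3 := by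
  have hn0 : n ≠ 0 := by omega
  set f := n.factorization with hf
  refine ⟨f.prod fun p k => p ^ (k / 2 - k % 2), f.prod fun p k => p ^ (k % 2), ?_, ?_, ?_⟩
  · rw [Nat.one_le_iff_ne_zero, Finsupp.prod]
    exact Finset.prod_ne_zero_iff.mpr fun p hp =>
      pow_ne_zero _ (Nat.prime_of_mem_primeFactors (by simpa [hf] using hp)).pos.ne'
  · rw [Nat.one_le_iff_ne_zero, Finsupp.prod]
    exact Finset.prod_ne_zero_iff.mpr fun p hp =>
      pow_ne_zero _ (Nat.prime_of_mem_primeFactors (by simpa [hf] using hp)).pos.ne'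
  · have hkey : ∀ p ∈ f.support, 2 ≤ f p := by
      intro p hp
      have hpp : p.Prime := Nat.prime_of_mem_primeFactors (by simpa [hf] using hp)
      have hdvd : p ∣ n := Nat.dvd_of_mem_primeFactors (by simpa [hf] using hp)
      have := (Nat.Prime.pow_dvd_iff_le_factorization hpp hn0).mp (h p hpp hdvd)
      simpa [hf] using this
    have : (f.prod fun p k => p ^ (k / 2 - k % 2)) ^ 2 * (f.prod fun p k => p ^ (k % 2)) ^ 3
        = f.prod fun p k => p ^ k := by
      rw [Finsupp.prod, Finsupp.prod, Finsupp.prod, ← Finset.prod_pow, ← Finset.prod_pow,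
        ← Finset.prod_mul_distrib]
      refine Finset.prod_congr rfl fun p hp => ?_
      have h2 : 2 ≤ f p := hkey p hp
      rw [← pow_mul, ← pow_mul, ← pow_add]
      congr 1
      omega
    rw [this, hf, Nat.factorization_prod_pow_eq_self hn0]

lemma sqrt_div_cube (x : ℝ) (hx : 1 ≤ x) (b : ℕ) (hb1 : 1 ≤ b) :
    Real.sqrt (x / (b:ℝ)^3) = Real.sqrt x * (b:ℝ) ^ (-(3/2) : ℝ) := by
  have hbpos : (0:ℝ) < b := by exact_mod_cast hb1
  rw [Real.sqrt_div (by linarith : (0:ℝ) ≤ x)]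
  rw [show ((b:ℝ)^3) = (b:ℝ) ^ (3:ℝ) by rw [← Real.rpow_natCast (b:ℝ) 3]; norm_num]
  rw [Real.sqrt_eq_rpow, Real.sqrt_eq_rpow, ← Real.rpow_mul hbpos.le,
    Real.rpow_neg hbpos.le, div_eq_mul_inv]
  norm_num

/-- The number of powerful (squarefull) numbers up to `x` is `O(√x)`. -/
theorem stmt_6 :
    ∃ C : ℝ, ∀ x : ℝ, 1 ≤ x →
      (({n : ℕ | 1 ≤ n ∧ (n : ℝ) ≤ x ∧
          ∀ p : ℕ, p.Prime → p ∣ n → p ^ 2 ∣ n}.ncard : ℝ)) ≤ C * Real.sqrt x := by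
  have hsum : Summable (fun b : ℕ => (b:ℝ) ^ (-(3/2) : ℝ)) :=
    (Real.summable_nat_rpow).mpr (by norm_num)
  refine ⟨∑' b : ℕ, (b:ℝ) ^ (-(3/2) : ℝ), fun x hx => ?_⟩
  set N := ⌊x⌋₊ with hN
  set M : ℕ → ℕ := fun b => ⌊Real.sqrt (x / (b:ℝ)^3)⌋₊ with hM
  set T : Finset (ℕ × ℕ) :=
    (Finset.Icc 1 N).biUnion (fun b => (Finset.Icc 1 (M b)).image (fun a => (a, b))) with hT
  -- the set injects into the image of T
  have hsub : {n : ℕ | 1 ≤ n ∧ (n : ℝ) ≤ x ∧ ∀ p : ℕ, p.Prime → p ∣ n → p ^ 2 ∣ n}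
      ⊆ (fun p : ℕ × ℕ => p.1 ^ 2 * p.2 ^ 3) '' ↑T := by
    rintro n ⟨hn1, hnx, hpow⟩
    obtain ⟨a, b, ha1, hb1, hab⟩ := powerful_decomp hn1 hpow
    refine ⟨(a, b), ?_, by simp [hab]⟩
    have hbpos : (0:ℝ) < (b:ℝ) := by exact_mod_cast hb1
    have hb3 : (0:ℝ) < (b:ℝ)^3 := by positivity
    have hnab : ((a:ℝ)^2 * (b:ℝ)^3 : ℝ) ≤ x := by
      have : ((n:ℝ)) = (a:ℝ)^2 * (b:ℝ)^3 := by exact_mod_cast congrArg (Nat.cast : ℕ → ℝ) hab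
      linarith [hnx, this.ge, this.le]
    have hbN : b ≤ N := by
      apply Nat.le_floor
      have hb1' : (1:ℝ) ≤ (b:ℝ) := by exact_mod_cast hb1
      have h1 : (b:ℝ) ≤ (b:ℝ)^3 := le_self_pow₀ hb1' (by norm_num)
      have h2 : (b:ℝ)^3 ≤ (a:ℝ)^2 * (b:ℝ)^3 := by
        have : (1:ℝ) ≤ (a:ℝ)^2 := by
          have : (1:ℝ) ≤ (a:ℝ) := by exact_mod_cast ha1
          nlinarith
        nlinarith
      linarith
    have haM : a ≤ M b := by
      apply Nat.le_floor
      rw [show Real.sqrt (x / (b:ℝ)^3) = Real.sqrt (x / (b:ℝ)^3) from rfl]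
      apply Real.le_sqrt' (by exact_mod_cast ha1 : (0:ℝ) < (a:ℝ)) |>.mpr
      rw [le_div_iff₀ hb3]
      linarith
    simp only [hT, Finset.coe_biUnion, Set.mem_iUnion, Finset.mem_coe]
    exact ⟨b, Finset.mem_Icc.mpr ⟨hb1, hbN⟩,
      Finset.mem_image.mpr ⟨a, Finset.mem_Icc.mpr ⟨ha1, haM⟩, rfl⟩⟩
  have hfin : ((fun p : ℕ × ℕ => p.1 ^ 2 * p.2 ^ 3) '' ↑T).Finite := T.finite_toSet.image _
  have h1 : ({n : ℕ | 1 ≤ n ∧ (n : ℝ) ≤ x ∧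
      ∀ p : ℕ, p.Prime → p ∣ n → p ^ 2 ∣ n}).ncard ≤ T.card := by
    calc _ ≤ ((fun p : ℕ × ℕ => p.1 ^ 2 * p.2 ^ 3) '' ↑T).ncard :=
          Set.ncard_le_ncard hsub hfin
      _ ≤ (↑T : Set (ℕ × ℕ)).ncard := Set.ncard_image_le T.finite_toSet
      _ = T.card := Set.ncard_coe_finset T
  have h2 : T.card ≤ ∑ b ∈ Finset.Icc 1 N, M b := by
    calc T.card ≤ ∑ b ∈ Finset.Icc 1 N, ((Finset.Icc 1 (M b)).image (fun a => (a, b))).card :=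
          Finset.card_biUnion_le
      _ ≤ ∑ b ∈ Finset.Icc 1 N, M b := by
          refine Finset.sum_le_sum fun b _ => ?_
          calc _ ≤ (Finset.Icc 1 (M b)).card := Finset.card_image_le
            _ = M b := by rw [Nat.card_Icc]; omega
  have h3 : (∑ b ∈ Finset.Icc 1 N, (M b : ℝ))
      ≤ Real.sqrt x * ∑ b ∈ Finset.Icc 1 N, (b:ℝ) ^ (-(3/2) : ℝ) := by
    rw [Finset.mul_sum]
    refine Finset.sum_le_sum fun b hb => ?_
    have hb1 : 1 ≤ b := (Finset.mem_Icc.mp hb).1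
    calc (M b : ℝ) ≤ Real.sqrt (x / (b:ℝ)^3) := Nat.floor_le (Real.sqrt_nonneg _)
      _ = Real.sqrt x * (b:ℝ) ^ (-(3/2) : ℝ) := sqrt_div_cube x hx b hb1
  have h4 : (∑ b ∈ Finset.Icc 1 N, (b:ℝ) ^ (-(3/2) : ℝ)) ≤ ∑' b : ℕ, (b:ℝ) ^ (-(3/2) : ℝ) :=
    Summable.sum_le_tsum _ (fun b _ => Real.rpow_nonneg (Nat.cast_nonneg b) _) hsum
  have hx0 : (0:ℝ) ≤ Real.sqrt x := Real.sqrt_nonneg x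
  calc (({n : ℕ | 1 ≤ n ∧ (n : ℝ) ≤ x ∧
          ∀ p : ℕ, p.Prime → p ∣ n → p ^ 2 ∣ n}.ncard : ℝ))
      ≤ (T.card : ℝ) := by exact_mod_cast h1
    _ ≤ (∑ b ∈ Finset.Icc 1 N, (M b : ℝ)) := by exact_mod_cast h2
    _ ≤ Real.sqrt x * ∑ b ∈ Finset.Icc 1 N, (b:ℝ) ^ (-(3/2) : ℝ) := h3
    _ ≤ Real.sqrt x * ∑' b : ℕ, (b:ℝ) ^ (-(3/2) : ℝ) := by
        exact mul_le_mul_of_nonneg_left h4 hx0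
    _ = (∑' b : ℕ, (b:ℝ) ^ (-(3/2) : ℝ)) * Real.sqrt x := mul_comm _ _
end

section
/- Let h be a multiplicative function with |h(p^k)| ≤ 2 for all prime powers, h(p^k) = 0 for all primes p > y, and |h(p)| ≤ |f(p) − 1| for p ≤ y where |f(p)| ≤ 1. Then ∑_{m=1}^∞ |h(m)|·log(m)/m ≪ (log y + 1)·exp(∑_{p ≤ y} |1 − f(p)|/p). -/
/-!
Rankin's trick: `log m ≤ m ^ σ / σ`, so with `σ = 1 / (2 + log y)` the series is at most
`(2 + log y) ∑ |h m| m ^ (σ - 1)`. As `h` lives on `y`-smooth numbers, the latter is an Euler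
product over `p ≤ y`. There `σ log p ≤ 1`, so `p ^ σ ≤ 1 + 3 σ log p` and each factor is at most
`exp (|h p| / p + 6 σ log p / p + 128 / p ^ 2)`. Mertens' estimate `∑_{p ≤ y} log p / p ≤ log y + 2`
makes the middle terms contribute `O(1)`, and `∑_p 1 / p ^ 2 ≤ 1`.
-/

open Finset Real
open scoped Nat

lemma Real.exp_le_one_add_three_mul {x : ℝ} (h0 : 0 ≤ x) (h1 : x ≤ 1) :
    exp x ≤ 1 + 3 * x := by
  have h2 : 1 - x ≤ exp (-x) := by linarith [add_one_le_exp (-x)]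
  have h3 : exp x ≤ exp 1 := exp_le_exp.mpr h1
  have h4 : exp (-x) * exp x = 1 := by rw [← exp_add]; simp
  nlinarith [exp_pos x, exp_one_lt_d9]

lemma tsum_mul_pow_le {c : ℕ → ℝ} {β : ℝ} (hc0 : ∀ k, 0 ≤ c k) (hc2 : ∀ k, c k ≤ 2)
    (hβ0 : 0 ≤ β) (hβ : β ≤ 3 / 4) :
    Summable (fun k => c k * β ^ k) ∧ ∑' k, c k * β ^ k ≤ c 0 + c 1 * β + 8 * β ^ 2 := by
  have hgeom : Summable (fun k => β ^ k) := summable_geometric_of_lt_one hβ0 (by linarith)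
  have hsum : Summable (fun k => c k * β ^ k) :=
    (hgeom.mul_left 2).of_nonneg_of_le (fun k => by have := hc0 k; positivity)
      fun k => mul_le_mul_of_nonneg_right (hc2 k) (pow_nonneg hβ0 k)
  refine ⟨hsum, ?_⟩
  have htail : ∑' k, c (k + 2) * β ^ (k + 2) ≤ 8 * β ^ 2 := calc
    _ ≤ ∑' k, 2 * β ^ 2 * β ^ k :=
      ((summable_nat_add_iff 2).mpr hsum).tsum_le_tsum (fun k => by
        rw [mul_assoc, ← pow_add, add_comm 2 k]
        exact mul_le_mul_of_nonneg_right (hc2 _) (pow_nonneg hβ0 _)) (hgeom.mul_left _)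
    _ = 2 * β ^ 2 * (1 - β)⁻¹ := by rw [tsum_mul_left, tsum_geometric_of_lt_one hβ0 (by linarith)]
    _ ≤ 2 * β ^ 2 * 4 := by
      gcongr
      rw [inv_le_comm₀ (by linarith) (by norm_num)]
      linarith
    _ = 8 * β ^ 2 := by ring
  rw [← hsum.sum_add_tsum_nat_add 2]
  simp only [sum_range_succ, sum_range_zero, pow_zero, pow_one, mul_one, zero_add]
  linarith

lemma rpow_sub_one_le_three_quarters {p σ : ℝ} (hp : 2 ≤ p) (hσ : σ ≤ 1 / 2) :
    p ^ (σ - 1) ≤ 3 / 4 := by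
  have hsq : (p ^ (σ - 1)) ^ 2 ≤ 1 / 2 := calc
    (p ^ (σ - 1)) ^ 2 = p ^ ((σ - 1) * (2 : ℕ)) := (rpow_mul_natCast (by linarith) _ _).symm
    _ ≤ p ^ (-1 : ℝ) := rpow_le_rpow_of_exponent_le (by linarith) (by push_cast; linarith)
    _ = p⁻¹ := rpow_neg_one p
    _ ≤ 1 / 2 := by rw [inv_le_comm₀ (by linarith) (by norm_num)]; linarith
  nlinarith [rpow_nonneg (show (0 : ℝ) ≤ p by linarith) (σ - 1)]

lemma rpow_le_one_add_three_mul {p σ : ℝ} (hp : 1 ≤ p) (hσ0 : 0 ≤ σ) (hσp : σ * log p ≤ 1) :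
    p ^ σ ≤ 1 + 3 * (σ * log p) := by
  rw [rpow_def_of_pos (by linarith), mul_comm]
  exact exp_le_one_add_three_mul (mul_nonneg hσ0 (log_nonneg hp)) hσp

namespace Nat

lemma div_le_factorization_factorial {p : ℕ} (hp : p.Prime) (n : ℕ) :
    n / p ≤ (n)!.factorization p := by
  rw [factorization_factorial hp (b := log p n + 2) (by omega)]
  simpa using single_le_sum (f := fun i => n / p ^ i) (fun _ _ => zero_le _)
    (show 1 ∈ Ico 1 (log p n + 2) by simp)

lemma log_factorial_eq_sum_primesLE (n : ℕ) :
    Real.log (n)! = ∑ p ∈ primesLE n, ((n)!.factorization p : ℝ) * Real.log p := by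
  rw [Real.log_nat_eq_sum_factorization]
  refine Finsupp.sum_of_support_subset _ (fun p hp => ?_) _ (by simp)
  rw [support_factorization] at hp
  have hp' := prime_of_mem_primeFactors hp
  exact mem_primesLE.mpr ⟨hp'.dvd_factorial.mp (dvd_of_mem_primeFactors hp), hp'⟩

-- Mertens' estimate, from `n ∑_{p ≤ n} log p / p ≤ ∑_{p ≤ n} (⌊n / p⌋ + 1) log p ≤ log n! + θ(n)`.
theorem sum_primesLE_log_div_le (n : ℕ) :
    ∑ p ∈ primesLE n, Real.log p / p ≤ Real.log n + Real.log 4 := by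
  rcases n.eq_zero_or_pos with rfl | hn
  · simp only [primesLE_zero, sum_empty, cast_zero, Real.log_zero, zero_add]
    positivity
  have hterm : ∀ p ∈ primesLE n,
      n * (Real.log p / p) ≤ ((n)!.factorization p : ℝ) * Real.log p + Real.log p := by
    intro p hp
    have hp' := (mem_primesLE.mp hp).2
    have hdiv : (n : ℝ) / p ≤ ((n)!.factorization p : ℝ) + 1 := by
      have := Nat.lt_floor_add_one ((n : ℝ) / p)
      rw [floor_div_eq_div] at this
      have := div_le_factorization_factorial hp' n
      linarith [(cast_le (α := ℝ)).mpr this]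
    calc (n : ℝ) * (Real.log p / p) = (n / p) * Real.log p := by ring
      _ ≤ (((n)!.factorization p : ℝ) + 1) * Real.log p := by gcongr
      _ = _ := by ring
  have htheta : ∑ p ∈ primesLE n, Real.log p ≤ Real.log 4 * n := by
    rw [← Chebyshev.theta_eq_sum_primesLE_log]
    exact Chebyshev.theta_le_log4_mul_x n.cast_nonneg
  have hfact : Real.log (n)! ≤ n * Real.log n := by
    rw [← Real.log_pow]
    exact Real.log_le_log (by positivity) (by exact_mod_cast factorial_le_pow n)
  refine le_of_mul_le_mul_left ?_ (cast_pos.mpr hn : (0 : ℝ) < n)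
  calc (n : ℝ) * ∑ p ∈ primesLE n, Real.log p / p
      = ∑ p ∈ primesLE n, n * (Real.log p / p) := mul_sum _ _ _
    _ ≤ ∑ p ∈ primesLE n, (((n)!.factorization p : ℝ) * Real.log p + Real.log p) :=
      sum_le_sum hterm
    _ = Real.log (n)! + ∑ p ∈ primesLE n, Real.log p := by
      rw [sum_add_distrib, log_factorial_eq_sum_primesLE]
    _ ≤ n * Real.log n + Real.log 4 * n := _root_.add_le_add hfact htheta
    _ = n * (Real.log n + Real.log 4) := by ring

lemma sum_primesLE_floor_log_div_le {y : ℝ} (hy : 1 ≤ y) :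
    ∑ p ∈ primesLE ⌊y⌋₊, Real.log p / p ≤ Real.log y + 2 := by
  have hfloor : Real.log ⌊y⌋₊ ≤ Real.log y :=
    Real.log_le_log (by exact_mod_cast floor_pos.mpr hy) (floor_le (by linarith))
  have hlog4 : Real.log 4 ≤ 2 := by
    rw [show (4 : ℝ) = 2 ^ 2 by norm_num, Real.log_pow, cast_ofNat]
    linarith [Real.log_two_lt_d9]
  linarith [sum_primesLE_log_div_le ⌊y⌋₊]

lemma sum_primesBelow_inv_sq_le_one (N : ℕ) : ∑ p ∈ N.primesBelow, ((p : ℝ) ^ 2)⁻¹ ≤ 1 := by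
  rw [primesBelow_eq_filter_Ioo_one]
  calc ∑ p ∈ Ioo 1 N with p.Prime, ((p : ℝ) ^ 2)⁻¹ ≤ ∑ i ∈ Ioo 1 N, ((i : ℝ) ^ 2)⁻¹ :=
        sum_le_sum_of_subset_of_nonneg (filter_subset _ _) fun _ _ _ => by positivity
    _ ≤ 2 / ((1 : ℕ) + 1) := sum_Ioo_inv_sq_le 1 N
    _ = 1 := by norm_num

lemma apply_eq_zero_of_notMem_smoothNumbers {M : Type*} [MulZeroClass M] {g : ℕ → M}
    (h0 : g 0 = 0) (hmul : ∀ a b : ℕ, Coprime a b → g (a * b) = g a * g b) {N : ℕ}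
    (hbig : ∀ p : ℕ, p.Prime → N ≤ p → ∀ k : ℕ, 1 ≤ k → g (p ^ k) = 0) {m : ℕ}
    (hm : m ∉ N.smoothNumbers) : g m = 0 := by
  rcases eq_or_ne m 0 with rfl | hm0
  · exact h0
  obtain ⟨p, hp, hpm, hNp⟩ : ∃ p, p.Prime ∧ p ∣ m ∧ N ≤ p := by
    simpa [mem_smoothNumbers', hm0] using hm
  rw [← ordProj_mul_ordCompl_eq_self m p,
    hmul _ _ ((coprime_ordCompl hp hm0).pow_left _),
    hbig p hp hNp _ (hp.factorization_pos_of_dvd hm0 hpm), zero_mul]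

end Nat

noncomputable def rankinTerm (h : ℕ → ℂ) (σ : ℝ) (m : ℕ) : ℝ := ‖h m‖ * (m : ℝ) ^ (σ - 1)

section rankinTerm

variable {h : ℕ → ℂ} {σ : ℝ}

lemma rankinTerm_nonneg (m : ℕ) : 0 ≤ rankinTerm h σ m := by
  unfold rankinTerm; positivity

lemma rankinTerm_one (h1 : h 1 = 1) : rankinTerm h σ 1 = 1 := by simp [rankinTerm, h1]

lemma rankinTerm_mul (hmul : ∀ a b : ℕ, Nat.Coprime a b → h (a * b) = h a * h b) {a b : ℕ}
    (hab : Nat.Coprime a b) : rankinTerm h σ (a * b) = rankinTerm h σ a * rankinTerm h σ b := by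
  simp only [rankinTerm, hmul a b hab, norm_mul, Nat.cast_mul,
    mul_rpow (Nat.cast_nonneg a) (Nat.cast_nonneg b)]
  ring

lemma rankinTerm_pow (p k : ℕ) :
    rankinTerm h σ (p ^ k) = ‖h (p ^ k)‖ * ((p : ℝ) ^ (σ - 1)) ^ k := by
  rw [rankinTerm, Nat.cast_pow, rpow_pow_comm (Nat.cast_nonneg p)]

lemma norm_mul_log_div_le_rankinTerm (hσ : 0 < σ) (m : ℕ) :
    ‖h m‖ * log m / m ≤ σ⁻¹ * rankinTerm h σ m := by
  rcases m.eq_zero_or_pos with rfl | hm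
  · simpa using mul_nonneg (inv_nonneg.mpr hσ.le) (rankinTerm_nonneg (h := h) (σ := σ) 0)
  have hm' : (0 : ℝ) < m := Nat.cast_pos.mpr hm
  have hlog : log m / m ≤ σ⁻¹ * (m : ℝ) ^ (σ - 1) := by
    rw [rpow_sub hm', rpow_one, div_le_iff₀ hm']
    have := log_le_rpow_div hm'.le hσ
    field_simp at this ⊢
    linarith
  calc ‖h m‖ * log m / m = ‖h m‖ * (log m / m) := mul_div_assoc _ _ _
    _ ≤ ‖h m‖ * (σ⁻¹ * (m : ℝ) ^ (σ - 1)) := by gcongr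
    _ = σ⁻¹ * rankinTerm h σ m := by rw [rankinTerm]; ring

lemma summable_rankinTerm_prime_pow {p : ℕ} (hp : p.Prime) (h2 : ∀ k, ‖h (p ^ k)‖ ≤ 2)
    (hσ : σ ≤ 1 / 2) : Summable (fun k => rankinTerm h σ (p ^ k)) := by
  simp only [rankinTerm_pow]
  exact (tsum_mul_pow_le (fun _ => norm_nonneg _) h2 (by positivity)
    (rpow_sub_one_le_three_quarters (by exact_mod_cast hp.two_le) hσ)).1

lemma tsum_rankinTerm_prime_pow_le_exp {p : ℕ} (hp : p.Prime) (h2 : ∀ k, ‖h (p ^ k)‖ ≤ 2)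
    (h1 : h 1 = 1) (hσ0 : 0 < σ) (hσ : σ ≤ 1 / 2)
    (hσp : σ * log p ≤ 1) :
    ∑' k, rankinTerm h σ (p ^ k) ≤ exp (‖h p‖ / p + 6 * (σ * log p / p) + 128 / p ^ 2) := by
  have hp0 : (0 : ℝ) < p := Nat.cast_pos.mpr hp.pos
  have hp1 : (1 : ℝ) ≤ p := by exact_mod_cast hp.one_lt.le
  have hβ : (p : ℝ) ^ (σ - 1) = p ^ σ / p := by rw [rpow_sub hp0, rpow_one]
  set β := (p : ℝ) ^ (σ - 1)
  have hpσ := rpow_le_one_add_three_mul hp1 hσ0.le hσp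
  have hβ3 : β ≤ 4 / p := by
    rw [hβ]; gcongr; linarith
  have hβ0 : 0 ≤ β := by positivity
  have hfirst : ‖h p‖ * β ≤ ‖h p‖ / p + 6 * (σ * log p / p) := by
    have h2p : ‖h p‖ ≤ 2 := by simpa using h2 1
    have : ‖h p‖ * p ^ σ ≤ ‖h p‖ + 6 * (σ * log p) := by
      nlinarith [norm_nonneg (h p), mul_nonneg hσ0.le (log_nonneg hp1)]
    calc ‖h p‖ * β = ‖h p‖ * p ^ σ / p := by rw [hβ, mul_div_assoc]
      _ ≤ (‖h p‖ + 6 * (σ * log p)) / p := by gcongr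
      _ = ‖h p‖ / p + 6 * (σ * log p / p) := by ring
  have hsecond : 8 * β ^ 2 ≤ 128 / (p : ℝ) ^ 2 := calc
    8 * β ^ 2 ≤ 8 * (4 / (p : ℝ)) ^ 2 := by gcongr
    _ = 128 / (p : ℝ) ^ 2 := by ring
  simp only [rankinTerm_pow]
  refine (tsum_mul_pow_le (fun _ => norm_nonneg _) h2 hβ0
    (rpow_sub_one_le_three_quarters (by exact_mod_cast hp.two_le) hσ)).2.trans ?_
  simp only [pow_zero, h1, norm_one, pow_one]
  linarith [add_one_le_exp (‖h p‖ / p + 6 * (σ * log p / p) + 128 / p ^ 2)]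

end rankinTerm

lemma EulerProduct.hasSum_prod_primesBelow_tsum {R : Type*} [NormedCommRing R] [CompleteSpace R]
    {f : ℕ → R} (hf₁ : f 1 = 1) (hmul : ∀ {m n}, Nat.Coprime m n → f (m * n) = f m * f n)
    (hsum : ∀ {p : ℕ}, p.Prime → Summable (fun n : ℕ => ‖f (p ^ n)‖)) {N : ℕ}
    (hsupp : ∀ m ∉ N.smoothNumbers, f m = 0) :
    HasSum f (∏ p ∈ N.primesBelow, ∑' n : ℕ, f (p ^ n)) :=
  (hasSum_subtype_iff_of_support_subset fun m hm => not_imp_comm.mp (hsupp m) hm).mp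
    (summable_and_hasSum_smoothNumbers_prod_primesBelow_tsum hf₁ hmul hsum N).2

lemma summable_rankinTerm_and_tsum_le_exp {y σ : ℝ} (hy : 1 ≤ y) (hσ0 : 0 < σ)
    (hσy : σ * (log y + 2) ≤ 1) {h : ℕ → ℂ} (h1 : h 1 = 1) (h0 : h 0 = 0)
    (hmul : ∀ a b : ℕ, Nat.Coprime a b → h (a * b) = h a * h b)
    (hpk : ∀ p : ℕ, p.Prime → ∀ k : ℕ, 1 ≤ k → ‖h (p ^ k)‖ ≤ 2)
    (hbig : ∀ p : ℕ, p.Prime → y < (p : ℝ) → ∀ k : ℕ, 1 ≤ k → h (p ^ k) = 0) :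
    Summable (rankinTerm h σ) ∧
      ∑' m, rankinTerm h σ m ≤ exp (134 + ∑ p ∈ Nat.primesLE ⌊y⌋₊, ‖h p‖ / p) := by
  have hlogy : 0 ≤ log y := log_nonneg hy
  have hσ : σ ≤ 1 / 2 := by nlinarith
  have h2 : ∀ p : ℕ, p.Prime → ∀ k, ‖h (p ^ k)‖ ≤ 2 := fun p hp k => by
    rcases k with _ | k
    · norm_num [h1]
    · exact hpk p hp _ k.succ_pos
  have hsupp : ∀ m ∉ (⌊y⌋₊ + 1).smoothNumbers, rankinTerm h σ m = 0 := fun m hm => by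
    have hbig' : ∀ p : ℕ, p.Prime → ⌊y⌋₊ + 1 ≤ p → ∀ k : ℕ, 1 ≤ k → h (p ^ k) = 0 :=
      fun p hp hyp => hbig p hp ((Nat.floor_lt (by linarith)).mp hyp)
    simp [rankinTerm, Nat.apply_eq_zero_of_notMem_smoothNumbers h0 hmul hbig' hm]
  have hprod := EulerProduct.hasSum_prod_primesBelow_tsum (rankinTerm_one h1)
    (fun hab => rankinTerm_mul hmul hab) (fun hp => by
      simpa [Real.norm_of_nonneg (rankinTerm_nonneg _)]
        using summable_rankinTerm_prime_pow hp (h2 _ hp) hσ) hsupp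
  refine ⟨hprod.summable, hprod.tsum_eq ▸ ?_⟩
  have hfactor : ∀ p ∈ Nat.primesLE ⌊y⌋₊, ∑' k, rankinTerm h σ (p ^ k) ≤
      exp (‖h p‖ / p + 6 * (σ * log p / p) + 128 / p ^ 2) := fun p hp => by
    obtain ⟨hpy, hp⟩ := Nat.mem_primesLE.mp hp
    have hlogp : log p ≤ log y := log_le_log (by exact_mod_cast hp.pos)
      ((Nat.le_floor_iff (by linarith)).mp hpy)
    exact tsum_rankinTerm_prime_pow_le_exp hp (h2 p hp) h1 hσ0 hσ (by nlinarith)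
  have hmertens : σ * ∑ p ∈ Nat.primesLE ⌊y⌋₊, log p / p ≤ 1 :=
    (mul_le_mul_of_nonneg_left (Nat.sum_primesLE_floor_log_div_le hy) hσ0.le).trans hσy
  have hsq := Nat.sum_primesBelow_inv_sq_le_one (⌊y⌋₊ + 1)
  calc ∏ p ∈ Nat.primesLE ⌊y⌋₊, ∑' k, rankinTerm h σ (p ^ k)
      ≤ ∏ p ∈ Nat.primesLE ⌊y⌋₊, exp (‖h p‖ / p + 6 * (σ * log p / p) + 128 / p ^ 2) :=
        prod_le_prod (fun p _ => tsum_nonneg fun _ => rankinTerm_nonneg _) hfactor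
    _ = exp (∑ p ∈ Nat.primesLE ⌊y⌋₊, ‖h p‖ / p + 6 * (σ * ∑ p ∈ Nat.primesLE ⌊y⌋₊, log p / p)
          + 128 * ∑ p ∈ (⌊y⌋₊ + 1).primesBelow, ((p : ℝ) ^ 2)⁻¹) := by
      rw [← exp_sum, sum_add_distrib, sum_add_distrib, mul_sum, mul_sum, mul_sum]
      simp only [Nat.primesLE, div_eq_mul_inv, mul_assoc]
    _ ≤ exp (134 + ∑ p ∈ Nat.primesLE ⌊y⌋₊, ‖h p‖ / p) := exp_le_exp.mpr (by linarith)

/-- If `h` is multiplicative with `|h(p^k)| ≤ 2` on all prime powers, `h(p^k) = 0`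
for primes `p > y`, and `|h(p)| ≤ |f(p) − 1|` for `p ≤ y` where `|f(p)| ≤ 1`, then
`∑_m |h(m)| log m / m ≪ (log y + 1)·exp(∑_{p ≤ y} |1 − f(p)|/p)` with an absolute
constant. -/
theorem stmt_16 :
    ∃ C : ℝ, 0 < C ∧ ∀ (y : ℝ), 2 ≤ y → ∀ (f h : ℕ → ℂ),
      h 1 = 1 → h 0 = 0 →
      (∀ a b : ℕ, Nat.Coprime a b → h (a * b) = h a * h b) →
      (∀ p : ℕ, p.Prime → ∀ k : ℕ, 1 ≤ k → ‖h (p ^ k)‖ ≤ 2) →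
      (∀ p : ℕ, p.Prime → y < (p : ℝ) → ∀ k : ℕ, 1 ≤ k → h (p ^ k) = 0) →
      (∀ p : ℕ, p.Prime → (p : ℝ) ≤ y → ‖h p‖ ≤ ‖f p - 1‖) →
      (∀ p : ℕ, p.Prime → ‖f p‖ ≤ 1) →
      Summable (fun m : ℕ => ‖h m‖ * Real.log m / m) ∧
      ∑' m : ℕ, ‖h m‖ * Real.log m / m ≤
        C * (Real.log y + 1) *
          Real.exp (∑ p ∈ (Finset.range (⌊y⌋₊ + 1)).filter Nat.Prime,
            ‖1 - f p‖ / p) := by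
  refine ⟨2 * exp 134, by positivity, fun y hy f h h1 h0 hmul hpk hbig hsmall _ => ?_⟩
  have hlogy : 0 ≤ log y := log_nonneg (by linarith)
  set σ := (2 + log y)⁻¹
  have hσ0 : 0 < σ := by positivity
  obtain ⟨hsum, hle⟩ := summable_rankinTerm_and_tsum_le_exp (by linarith) hσ0
    (by rw [add_comm, inv_mul_cancel₀ (by positivity)]) h1 h0 hmul hpk hbig
  have hterm := norm_mul_log_div_le_rankinTerm (h := h) hσ0
  have hsum' : Summable fun m : ℕ => ‖h m‖ * log m / m :=
    (hsum.mul_left σ⁻¹).of_nonneg_of_le (fun m => by positivity) hterm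
  have hA : ∑ p ∈ Nat.primesLE ⌊y⌋₊, ‖h p‖ / p ≤ ∑ p ∈ Nat.primesLE ⌊y⌋₊, ‖1 - f p‖ / p :=
    sum_le_sum fun p hp => by
      obtain ⟨hpy, hp⟩ := Nat.mem_primesLE.mp hp
      gcongr
      rw [norm_sub_rev]
      exact hsmall p hp ((Nat.le_floor_iff (by linarith)).mp hpy)
  refine ⟨hsum', ?_⟩
  calc ∑' m : ℕ, ‖h m‖ * log m / m ≤ σ⁻¹ * ∑' m, rankinTerm h σ m := by
        rw [← tsum_mul_left]; exact hsum'.tsum_le_tsum hterm (hsum.mul_left _)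
    _ ≤ (2 + log y) * exp (134 + ∑ p ∈ Nat.primesLE ⌊y⌋₊, ‖1 - f p‖ / p) := by
      rw [inv_inv]
      exact mul_le_mul_of_nonneg_left (hle.trans (exp_le_exp.mpr (by linarith))) (by positivity)
    _ ≤ 2 * (log y + 1) * exp (134 + ∑ p ∈ Nat.primesLE ⌊y⌋₊, ‖1 - f p‖ / p) := by
      gcongr; linarith
    _ = 2 * exp 134 * (log y + 1) * exp (∑ p ∈ Nat.primesLE ⌊y⌋₊, ‖1 - f p‖ / p) := by
      rw [exp_add]; ring
end
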